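/- arXiv:1706.01599 — 4 statements merged into one kernel-verified Lean document; each statement's English description precedes it below -/
import Mathlib

section
/- Let G' be the graph with vertex set {x} ∪ {w_1,…,w_24} ∪ {a_i, b_i, c_i : 1 ≤ i ≤ 23}, where x is adjacent to all w_i, the w_i form a path w_1 − w_2 − ⋯ − w_24, and for each i the three vertices a_i, b_i, c_i are each adjacent to both w_i and w_{i+1}. Then G' is not 2-defective 2-choosable: there exists a 2-list assignment L of G' such that G' has no 2-defective L-coloring. -/
open scoped Classical

/-- The vertex set of the graph `G'` from the paper: a vertex `x`, a path `w_1, …, w_24`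
(indexed here by `Fin 24`), and for each `i ∈ {1, …, 23}` three vertices `a_i`, `b_i`, `c_i`. -/
inductive GadgetV : Type
  | x : GadgetV
  | w : Fin 24 → GadgetV
  | a : Fin 23 → GadgetV
  | b : Fin 23 → GadgetV
  | c : Fin 23 → GadgetV
  deriving DecidableEq

/-- Base adjacency: `x` is adjacent to every `w_i`; the `w_i` form a path; and each of
`a_i`, `b_i`, `c_i` is adjacent to both `w_i` and `w_{i+1}`. -/
def gadgetRel : GadgetV → GadgetV → Prop
  | .x, .w _ => True
  | .w i, .w j => (j : ℕ) = (i : ℕ) + 1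
  | .a i, .w j => (j : ℕ) = (i : ℕ) ∨ (j : ℕ) = (i : ℕ) + 1
  | .b i, .w j => (j : ℕ) = (i : ℕ) ∨ (j : ℕ) = (i : ℕ) + 1
  | .c i, .w j => (j : ℕ) = (i : ℕ) ∨ (j : ℕ) = (i : ℕ) + 1
  | _, _ => False

/-- The graph `G'`. -/
def GadgetG : SimpleGraph GadgetV := SimpleGraph.fromRel gadgetRel

/-- A coloring is `d`-defective if every vertex has at most `d` neighbors of its own color. -/
def DefColoring {V : Type*} {α : Type*} (G : SimpleGraph V) (d : ℕ) (c : V → α) : Prop :=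
  ∀ v, {u | G.Adj v u ∧ c u = c v}.ncard ≤ d

instance : Fintype GadgetV := derive_fintype% _

def wv (n : ℕ) : GadgetV := GadgetV.w ⟨n % 24, Nat.mod_lt _ (by norm_num)⟩
def av (n : ℕ) : GadgetV := GadgetV.a ⟨n % 23, Nat.mod_lt _ (by norm_num)⟩
def bv (n : ℕ) : GadgetV := GadgetV.b ⟨n % 23, Nat.mod_lt _ (by norm_num)⟩
def cv (n : ℕ) : GadgetV := GadgetV.c ⟨n % 23, Nat.mod_lt _ (by norm_num)⟩

lemma adj_xw (m : ℕ) : GadgetG.Adj GadgetV.x (wv m) := by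
  rw [GadgetG, SimpleGraph.fromRel_adj]
  simp [wv, gadgetRel]

lemma adj_wa {k m : ℕ} (hk : k + 1 < 24) (hm : m = k ∨ m = k + 1) :
    GadgetG.Adj (wv m) (av k) := by
  rw [GadgetG, SimpleGraph.fromRel_adj]
  refine ⟨by simp [wv, av], Or.inr ?_⟩
  simp [wv, av, gadgetRel]
  omega

lemma adj_wb {k m : ℕ} (hk : k + 1 < 24) (hm : m = k ∨ m = k + 1) :
    GadgetG.Adj (wv m) (bv k) := by
  rw [GadgetG, SimpleGraph.fromRel_adj]
  refine ⟨by simp [wv, bv], Or.inr ?_⟩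
  simp [wv, bv, gadgetRel]
  omega

lemma adj_wc {k m : ℕ} (hk : k + 1 < 24) (hm : m = k ∨ m = k + 1) :
    GadgetG.Adj (wv m) (cv k) := by
  rw [GadgetG, SimpleGraph.fromRel_adj]
  refine ⟨by simp [wv, cv], Or.inr ?_⟩
  simp [wv, cv, gadgetRel]
  omega


lemma key (f : GadgetV → ℕ) (hdef : DefColoring GadgetG 2 f) (j : ℕ) (hj : j ≤ 20)
    (hw : ∀ m, m ≤ 3 → f (wv (j + m)) = j + m + 1)
    (ha : ∀ k, k ≤ 2 → f (av (j + k)) = j + k + 1 ∨ f (av (j + k)) = j + k + 2)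
    (hb : ∀ k, k ≤ 2 → f (bv (j + k)) = j + k + 1 ∨ f (bv (j + k)) = j + k + 2)
    (hc : ∀ k, k ≤ 2 → f (cv (j + k)) = j + k + 1 ∨ f (cv (j + k)) = j + k + 2) :
    False := by
  classical
  set S : ℕ → Finset GadgetV :=
    fun m => Finset.univ.filter (fun u => GadgetG.Adj (wv (j + m)) u ∧ f u = j + m + 1) with hSdef
  have hScard : ∀ m, m ≤ 3 → (S m).card ≤ 2 := by
    intro m hm
    have h1 := hdef (wv (j + m))
    rw [hw m hm] at h1
    have hset : ((S m : Finset GadgetV) : Set GadgetV)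
        = {u | GadgetG.Adj (wv (j + m)) u ∧ f u = j + m + 1} := by
      ext u; simp [hSdef]
    rw [← hset, Set.ncard_coe_finset] at h1
    exact h1
  have hk24 : ∀ k : ℕ, k ≤ 2 → j + k + 1 < 24 := by intro k hk; omega
  have hmemS : ∀ k, k ≤ 2 → ∀ v, GadgetG.Adj (wv (j + k)) v → GadgetG.Adj (wv (j + k + 1)) v →
      (f v = j + k + 1 ∨ f v = j + k + 2) → v ∈ S k ∪ S (k + 1) := by
    intro k hk v hadj1 hadj2 hcol
    rcases hcol with h | h
    · exact Finset.mem_union_left _ (by simp [hSdef]; exact ⟨hadj1, h⟩)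
    · refine Finset.mem_union_right _ ?_
      simp only [hSdef, Finset.mem_filter, Finset.mem_univ, true_and]
      have e : j + (k + 1) = j + k + 1 := by omega
      rw [e]
      exact ⟨hadj2, by omega⟩
  set l : List GadgetV := [av j, av (j+1), av (j+2), bv j, bv (j+1), bv (j+2),
    cv j, cv (j+1), cv (j+2)] with hl
  have hnd : l.Nodup := by
    simp [hl, av, bv, cv, Fin.ext_iff]
    omega
  set U : Finset GadgetV := S 0 ∪ S 1 ∪ S 2 ∪ S 3 with hU
  have hsubU : ∀ k, k ≤ 2 → S k ∪ S (k + 1) ⊆ U := by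
    intro k hk v hv
    simp only [hU, Finset.mem_union] at hv ⊢
    interval_cases k <;> tauto
  have hsub : l.toFinset ⊆ U := by
    intro v hv
    simp only [hl, List.mem_toFinset, List.mem_cons, List.not_mem_nil, or_false] at hv
    have step : ∀ k, k ≤ 2 → (v = av (j+k) ∨ v = bv (j+k) ∨ v = cv (j+k)) → v ∈ U := by
      intro k hk hv
      apply hsubU k hk
      rcases hv with rfl | rfl | rfl
      · exact hmemS k hk _ (adj_wa (hk24 k hk) (Or.inl rfl)) (adj_wa (hk24 k hk) (Or.inr rfl)) (ha k hk)
      · exact hmemS k hk _ (adj_wb (hk24 k hk) (Or.inl rfl)) (adj_wb (hk24 k hk) (Or.inr rfl)) (hb k hk)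
      · exact hmemS k hk _ (adj_wc (hk24 k hk) (Or.inl rfl)) (adj_wc (hk24 k hk) (Or.inr rfl)) (hc k hk)
    have e0 : j = j + 0 := rfl
    rcases hv with h|h|h|h|h|h|h|h|h
    · exact step 0 (by omega) (by rw [← e0]; tauto)
    · exact step 1 (by omega) (by tauto)
    · exact step 2 (by omega) (by tauto)
    · exact step 0 (by omega) (by rw [← e0]; tauto)
    · exact step 1 (by omega) (by tauto)
    · exact step 2 (by omega) (by tauto)
    · exact step 0 (by omega) (by rw [← e0]; tauto)
    · exact step 1 (by omega) (by tauto)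
    · exact step 2 (by omega) (by tauto)
  have h9 : l.toFinset.card = 9 := by
    rw [List.toFinset_card_of_nodup hnd]; simp [hl]
  have hUcard : U.card ≤ 8 := by
    have c0 := hScard 0 (by omega)
    have c1 := hScard 1 (by omega)
    have c2 := hScard 2 (by omega)
    have c3 := hScard 3 (by omega)
    calc U.card ≤ (S 0 ∪ S 1 ∪ S 2).card + (S 3).card := Finset.card_union_le _ _
      _ ≤ ((S 0 ∪ S 1).card + (S 2).card) + (S 3).card := by
          exact Nat.add_le_add_right (Finset.card_union_le _ _) _
      _ ≤ (((S 0).card + (S 1).card) + (S 2).card) + (S 3).card := by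
          exact Nat.add_le_add_right (Nat.add_le_add_right (Finset.card_union_le _ _) _) _
      _ ≤ 8 := by omega
  have := Finset.card_le_card hsub
  omega

lemma case_lemma (f : GadgetV → ℕ) (hdef : DefColoring GadgetG 2 f) (base col : ℕ)
    (hbase : base ≤ 12)
    (hx : f GadgetV.x = col)
    (hw : ∀ i, i < 12 → f (wv (base + i)) = col ∨ f (wv (base + i)) = base + i + 1)
    (ha : ∀ k, k < 23 → f (av k) = k + 1 ∨ f (av k) = k + 2)
    (hb : ∀ k, k < 23 → f (bv k) = k + 1 ∨ f (bv k) = k + 2)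
    (hc : ∀ k, k < 23 → f (cv k) = k + 1 ∨ f (cv k) = k + 2) : False := by
  classical
  set Dx : Finset GadgetV :=
    Finset.univ.filter (fun u => GadgetG.Adj GadgetV.x u ∧ f u = col) with hDxdef
  have hDx : Dx.card ≤ 2 := by
    have h1 := hdef GadgetV.x
    rw [hx] at h1
    have hset : ((Dx : Finset GadgetV) : Set GadgetV)
        = {u | GadgetG.Adj GadgetV.x u ∧ f u = col} := by ext u; simp [hDxdef]
    rw [← hset, Set.ncard_coe_finset] at h1
    exact h1
  set B : Finset ℕ := (Finset.range 12).filter (fun i => f (wv (base + i)) = col) with hBdef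
  have hB : B.card ≤ 2 := by
    have hle : B.card ≤ Dx.card := by
      apply Finset.card_le_card_of_injOn (fun i => wv (base + i))
      · intro i hi
        simp only [hBdef, Finset.mem_coe, Finset.mem_filter, Finset.mem_range] at hi
        simp only [hDxdef, Finset.mem_coe, Finset.mem_filter, Finset.mem_univ, true_and]
        exact ⟨adj_xw _, hi.2⟩
      · intro i hi i' hi' hii
        simp only [hBdef, Finset.coe_filter, Finset.mem_range, Set.mem_setOf_eq] at hi hi'
        simp only [wv, GadgetV.w.injEq, Fin.mk.injEq] at hii
        omega
    omega
  have hrun : ∃ t, (t = 0 ∨ t = 4 ∨ t = 8) ∧ ∀ m, m ≤ 3 → f (wv (base + (t + m))) ≠ col := by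
    by_contra hcon
    push_neg at hcon
    obtain ⟨m0, hm0, hc0⟩ := hcon 0 (Or.inl rfl)
    obtain ⟨m4, hm4, hc4⟩ := hcon 4 (Or.inr (Or.inl rfl))
    obtain ⟨m8, hm8, hc8⟩ := hcon 8 (Or.inr (Or.inr rfl))
    have hsub3 : ([0 + m0, 4 + m4, 8 + m8] : List ℕ).toFinset ⊆ B := by
      intro i hi
      simp only [List.mem_toFinset, List.mem_cons, List.not_mem_nil, or_false] at hi
      simp only [hBdef, Finset.mem_filter, Finset.mem_range]
      rcases hi with rfl | rfl | rfl
      · exact ⟨by omega, hc0⟩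
      · exact ⟨by omega, hc4⟩
      · exact ⟨by omega, hc8⟩
    have h3 : ([0 + m0, 4 + m4, 8 + m8] : List ℕ).toFinset.card = 3 := by
      rw [List.toFinset_card_of_nodup (by simp; omega)]
      simp
    have := Finset.card_le_card hsub3
    omega
  obtain ⟨t, ht, hrun⟩ := hrun
  apply key f hdef (base + t) (by omega)
  · intro m hm
    have e : base + t + m = base + (t + m) := by omega
    rw [e]
    rcases hw (t + m) (by omega) with h | h
    · exact absurd h (hrun m hm)
    · rw [h]
  · intro k hk; exact ha (base + t + k) (by omega)
  · intro k hk; exact hb (base + t + k) (by omega)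
  · intro k hk; exact hc (base + t + k) (by omega)

def Lfun : GadgetV → Finset ℕ
  | .x => {100, 200}
  | .w i => if (i : ℕ) ≤ 11 then {(i : ℕ) + 1, 100} else {(i : ℕ) + 1, 200}
  | .a i => {(i : ℕ) + 1, (i : ℕ) + 2}
  | .b i => {(i : ℕ) + 1, (i : ℕ) + 2}
  | .c i => {(i : ℕ) + 1, (i : ℕ) + 2}

/-- `G'` is not `2`-defective `2`-choosable: there is a `2`-list assignment `L` such that `G'`
admits no `2`-defective `L`-coloring. -/
theorem gadget_not_two_defective_two_choosable :
    ∃ L : GadgetV → Finset ℕ, (∀ v, (L v).card = 2) ∧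
      ¬ ∃ f : GadgetV → ℕ, (∀ v, f v ∈ L v) ∧ DefColoring GadgetG 2 f := by
  refine ⟨Lfun, ?_, ?_⟩
  · intro v
    cases v with
    | x => decide
    | w i =>
      have := i.isLt
      simp only [Lfun]
      split <;> exact Finset.card_pair (by omega)
    | a i => have := i.isLt; exact Finset.card_pair (by omega)
    | b i => have := i.isLt; exact Finset.card_pair (by omega)
    | c i => have := i.isLt; exact Finset.card_pair (by omega)
  · rintro ⟨f, hf, hdef⟩
    have habc : (∀ k, k < 23 → f (av k) = k + 1 ∨ f (av k) = k + 2)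
        ∧ (∀ k, k < 23 → f (bv k) = k + 1 ∨ f (bv k) = k + 2)
        ∧ (∀ k, k < 23 → f (cv k) = k + 1 ∨ f (cv k) = k + 2) := by
      refine ⟨fun k hk => ?_, fun k hk => ?_, fun k hk => ?_⟩
      · have h := hf (av k)
        simp only [av, Lfun, Finset.mem_insert, Finset.mem_singleton,
          Nat.mod_eq_of_lt hk] at h
        simpa only [av, Nat.mod_eq_of_lt hk] using h
      · have h := hf (bv k)
        simp only [bv, Lfun, Finset.mem_insert, Finset.mem_singleton,
          Nat.mod_eq_of_lt hk] at h
        simpa only [bv, Nat.mod_eq_of_lt hk] using h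
      · have h := hf (cv k)
        simp only [cv, Lfun, Finset.mem_insert, Finset.mem_singleton,
          Nat.mod_eq_of_lt hk] at h
        simpa only [cv, Nat.mod_eq_of_lt hk] using h
    have hxmem := hf GadgetV.x
    simp only [Lfun, Finset.mem_insert, Finset.mem_singleton] at hxmem
    rcases hxmem with hx | hx
    · refine case_lemma f hdef 0 100 (by omega) hx ?_ habc.1 habc.2.1 habc.2.2
      intro i hi
      have h := hf (wv (0 + i))
      have e : (0 + i) % 24 = i := by omega
      simp only [wv, Lfun, e] at h
      rw [if_pos (by omega)] at h
      simp only [Finset.mem_insert, Finset.mem_singleton] at h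
      simp only [wv, e]
      rcases h with h | h
      · right; rw [h]; omega
      · left; exact h
    · refine case_lemma f hdef 12 200 (by omega) hx ?_ habc.1 habc.2.1 habc.2.2
      intro i hi
      have h := hf (wv (12 + i))
      have e : (12 + i) % 24 = 12 + i := by omega
      simp only [wv, Lfun, e] at h
      rw [if_neg (by omega)] at h
      simp only [Finset.mem_insert, Finset.mem_singleton] at h
      simp only [wv, e]
      rcases h with h | h
      · right; rw [h]
      · left; exact h
end

section
/- Let z be a vertex colored α whose neighbors include all vertices of a path P (the petal path), and suppose x is a vertex of P colored β such that both neighbors y, y' of x on P are colored β, and every inner vertex of the attachment paths P(x,y) and P(x,y') is adjacent to both endpoints appropriately. If each of y, x, y' already has two β-colored neighbors on P, then in any 2-defective 2-coloring with colors α, β all vertices of P(x,y) and P(x,y') must be colored α. -/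
open scoped Classical

/-- In a `2`-defective coloring with colors `α, β`: if each of the vertices `x, y, y'` (colored
`β`, lying on the petal path `P`) already has exactly two `β`-colored neighbors inside `P`,
then every vertex outside `P` adjacent to one of `x, y, y'` (in particular every vertex of the
attachment paths `P(x,y)` and `P(x,y')`) must be colored `α`. -/
theorem attachment_paths_forced_alpha {V : Type*} [Fintype V] (G : SimpleGraph V)
    (f : V → ℕ) (α β : ℕ) (hαβ : α ≠ β)
    (hcol : ∀ v, f v = α ∨ f v = β)
    (hdef : DefColoring G 2 f)
    (P : Set V) (x y y' : V)
    (hxP : x ∈ P) (hyP : y ∈ P) (hy'P : y' ∈ P)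
    (hsat : ∀ s ∈ ({x, y, y'} : Set V),
      f s = β ∧ {u | u ∈ P ∧ G.Adj s u ∧ f u = β}.ncard = 2)
    (Q : Set V) (hQ : ∀ t ∈ Q, t ∉ P ∧ ∃ s ∈ ({x, y, y'} : Set V), G.Adj s t) :
    ∀ t ∈ Q, f t = α := by
  intro t ht
  obtain ⟨htP, s, hs, hst⟩ := hQ t ht
  obtain ⟨hsβ, hcard⟩ := hsat s hs
  by_contra hta
  have htβ : f t = β := (hcol t).resolve_left hta
  have hsub : insert t {u | u ∈ P ∧ G.Adj s u ∧ f u = β} ⊆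
      {u | G.Adj s u ∧ f u = f s} := by
    intro u hu
    rcases hu with rfl | hu
    · exact ⟨hst, by rw [htβ, hsβ]⟩
    · exact ⟨hu.2.1, by rw [hu.2.2, hsβ]⟩
  have h3 : 3 ≤ ({u | G.Adj s u ∧ f u = f s} : Set V).ncard := by
    have hins : (insert t {u | u ∈ P ∧ G.Adj s u ∧ f u = β}).ncard = 3 := by
      rw [Set.ncard_insert_of_notMem (fun h => htP h.1) (Set.toFinite _), hcard]
    calc 3 = _ := hins.symm
      _ ≤ _ := Set.ncard_le_ncard hsub (Set.toFinite _)
  have := hdef s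
  omega
end

section
/- Let G be a graph containing vertices z, x, y, y', t, w where: z is adjacent to x, y, y' and these lie consecutively on a path of β-colored vertices; all inner vertices of the paths P(x,y) and P(x,y') are forced to color α; t is such an inner vertex adjacent to x (via the triangulation) with two α-colored neighbors; and w is adjacent to both x and t. Then in any {α,β}-coloring extending these constraints, coloring w with α gives t three α-neighbors and coloring w with β gives x three β-neighbors; hence G has no 2-defective 2-coloring consistent with the constraints. -/
open scoped Classical

/-- The `bad vertex' contradiction step: with colors `α, β`, if `t` is colored `α` and already
has two `α`-colored neighbors other than `w`, `x` is colored `β` and already has two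
`β`-colored neighbors other than `w`, and `w` is adjacent to both `t` and `x`, then the
coloring cannot be `2`-defective (coloring `w` with `α` gives `t` three `α`-neighbors,
coloring `w` with `β` gives `x` three `β`-neighbors). -/
theorem bad_vertex_contradiction {V : Type*} [Fintype V] (G : SimpleGraph V)
    (f : V → ℕ) (α β : ℕ) (hαβ : α ≠ β)
    (hcol : ∀ v, f v = α ∨ f v = β)
    (x t w : V) (hft : f t = α) (hfx : f x = β)
    (ht2 : 2 ≤ {u | G.Adj t u ∧ f u = α ∧ u ≠ w}.ncard)
    (hx2 : 2 ≤ {u | G.Adj x u ∧ f u = β ∧ u ≠ w}.ncard)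
    (hwt : G.Adj w t) (hwx : G.Adj w x) :
    ¬ DefColoring G 2 f := by
  intro hdef
  have key : ∀ (v : V) (γ : ℕ), f v = γ → G.Adj v w → f w = γ →
      ¬ (2 ≤ {u | G.Adj v u ∧ f u = γ ∧ u ≠ w}.ncard) := by
    intro v γ hv hadj hw h2
    have hsub : insert w {u | G.Adj v u ∧ f u = γ ∧ u ≠ w} ⊆ {u | G.Adj v u ∧ f u = f v} := by
      intro u hu
      rcases hu with rfl | hu
      · exact ⟨hadj, hw.trans hv.symm⟩
      · exact ⟨hu.1, hu.2.1.trans hv.symm⟩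
    have hfin : ({u | G.Adj v u ∧ f u = γ ∧ u ≠ w} : Set V).Finite := Set.toFinite _
    have hnmem : w ∉ {u | G.Adj v u ∧ f u = γ ∧ u ≠ w} := fun h => h.2.2 rfl
    have hcard := Set.ncard_insert_of_notMem hnmem hfin
    have hle := Set.ncard_le_ncard hsub (Set.toFinite _)
    have := hdef v
    omega
  rcases hcol w with hw | hw
  · exact key t α hft hwt.symm hw ht2
  · exact key x β hfx hwx.symm hw hx2
end

section
/- Consider the 2-defective 3-painting game on a graph G containing nine disjoint subgraphs H_1, …, H_9 and a vertex v adjacent to every vertex of a designated 'skeleton' subset S_i ⊆ V(H_i) for each i. If Lister, in rounds 1–3, marks v (while uncolored) together with the skeletons of three of the H_i's per round, then in whichever round i Painter colors v, at most 2 vertices of S_{3i−2} ∪ S_{3i−1} ∪ S_{3i} are colored that round; hence there exists j ∈ {3i−2, 3i−1, 3i} such that after round 3 every vertex of S_j is uncolored and has exactly 2 tokens remaining. -/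
open scoped Classical

/-- Rounds 1–3 of Lister's strategy in the `2`-defective `3`-painting game: `v` is adjacent to
all vertices of the nine pairwise disjoint skeletons `S 0, …, S 8`; in round `r ∈ {0,1,2}`
Lister marks `M r = {v} ∪ S (3r) ∪ S (3r+1) ∪ S (3r+2)`, and Painter colors `X r ⊆ M r`
inducing a subgraph of maximum degree at most `2`.  If Painter colors `v` in round `i`, then at
most `2` vertices of `S (3i) ∪ S (3i+1) ∪ S (3i+2)` are colored in that round, so there is
`t < 3` such that after the three rounds every vertex of `S (3i+t)` is uncolored and was
marked exactly once, i.e. has exactly `3 - 1 = 2` tokens left. -/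
theorem lister_first_rounds {V : Type*} [Fintype V] [DecidableEq V] (G : SimpleGraph V)
    (v : V) (S : Fin 9 → Finset V)
    (hdisj : ∀ i j, i ≠ j → Disjoint (S i) (S j))
    (hvS : ∀ j, v ∉ S j)
    (hadj : ∀ j, ∀ u ∈ S j, G.Adj v u)
    (M X : Fin 3 → Finset V)
    (hM : ∀ r : Fin 3, M r = insert v
      (S ⟨3 * (r : ℕ), by have := r.isLt; omega⟩ ∪
       S ⟨3 * (r : ℕ) + 1, by have := r.isLt; omega⟩ ∪
       S ⟨3 * (r : ℕ) + 2, by have := r.isLt; omega⟩))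
    (hXM : ∀ r, X r ⊆ M r)
    (hdeg : ∀ r, ∀ u ∈ X r, ((X r).filter (G.Adj u)).card ≤ 2)
    (i : Fin 3) (hvX : v ∈ X i) (hvonce : ∀ r, r ≠ i → v ∉ X r) :
    ∃ (t : ℕ) (_ht : t < 3),
      ∀ u ∈ S ⟨3 * (i : ℕ) + t, by have := i.isLt; omega⟩,
        (∀ r, u ∉ X r) ∧
        (Finset.univ.filter fun r : Fin 3 => u ∈ M r).card = 1 := by
  have hilt := i.isLt
  -- membership in M r is equivalent to r = i, for u in one of the three relevant skeletons
  have hMmem : ∀ (t : ℕ) (ht : t < 3) (u : V),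
      u ∈ S ⟨3 * (i : ℕ) + t, by omega⟩ → ∀ r : Fin 3, u ∈ M r ↔ r = i := by
    intro t ht u hu r
    rw [hM r]
    simp only [Finset.mem_insert, Finset.mem_union]
    constructor
    · rintro (rfl | (h | h) | h)
      · exact absurd hu (hvS _)
      · by_contra hri
        have hne : (⟨3 * (r : ℕ), by have := r.isLt; omega⟩ : Fin 9) ≠
            ⟨3 * (i : ℕ) + t, by omega⟩ := by
          have : (r : ℕ) ≠ (i : ℕ) := fun h => hri (Fin.ext h)
          simp only [ne_eq, Fin.mk.injEq]; omega
        exact Finset.disjoint_left.mp (hdisj _ _ hne) h hu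
      · by_contra hri
        have hne : (⟨3 * (r : ℕ) + 1, by have := r.isLt; omega⟩ : Fin 9) ≠
            ⟨3 * (i : ℕ) + t, by omega⟩ := by
          have : (r : ℕ) ≠ (i : ℕ) := fun h => hri (Fin.ext h)
          simp only [ne_eq, Fin.mk.injEq]; omega
        exact Finset.disjoint_left.mp (hdisj _ _ hne) h hu
      · by_contra hri
        have hne : (⟨3 * (r : ℕ) + 2, by have := r.isLt; omega⟩ : Fin 9) ≠
            ⟨3 * (i : ℕ) + t, by omega⟩ := by
          have : (r : ℕ) ≠ (i : ℕ) := fun h => hri (Fin.ext h)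
          simp only [ne_eq, Fin.mk.injEq]; omega
        exact Finset.disjoint_left.mp (hdisj _ _ hne) h hu
    · rintro rfl
      interval_cases t
      · exact Or.inr (Or.inl (Or.inl hu))
      · exact Or.inr (Or.inl (Or.inr hu))
      · exact Or.inr (Or.inr hu)
  -- from the existence of an empty intersection, conclude
  have main : ∀ (t : ℕ) (ht : t < 3),
      (∀ u ∈ S ⟨3 * (i : ℕ) + t, by omega⟩, u ∉ X i) →
      ∃ (t' : ℕ) (_ht : t' < 3),
      ∀ u ∈ S ⟨3 * (i : ℕ) + t', by omega⟩,
        (∀ r, u ∉ X r) ∧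
        (Finset.univ.filter fun r : Fin 3 => u ∈ M r).card = 1 := by
    intro t ht hempty
    refine ⟨t, ht, fun u hu => ⟨fun r hur => ?_, ?_⟩⟩
    · by_cases hr : r = i
      · exact hempty u hu (hr ▸ hur)
      · exact hr (((hMmem t ht u hu r).mp (hXM r hur)))
    · have : (Finset.univ.filter fun r : Fin 3 => u ∈ M r) = {i} := by
        ext r
        simp [hMmem t ht u hu r]
      rw [this, Finset.card_singleton]
  -- pigeonhole: one of the three skeletons has no colored vertex in round i
  by_cases h0 : ∀ u ∈ S ⟨3 * (i : ℕ), by omega⟩, u ∉ X i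
  · exact main 0 (by omega) h0
  by_cases h1 : ∀ u ∈ S ⟨3 * (i : ℕ) + 1, by omega⟩, u ∉ X i
  · exact main 1 (by omega) h1
  by_cases h2 : ∀ u ∈ S ⟨3 * (i : ℕ) + 2, by omega⟩, u ∉ X i
  · exact main 2 (by omega) h2
  exfalso
  push_neg at h0 h1 h2
  obtain ⟨u0, hu0S, hu0X⟩ := h0
  obtain ⟨u1, hu1S, hu1X⟩ := h1
  obtain ⟨u2, hu2S, hu2X⟩ := h2
  have hne01 : u0 ≠ u1 := fun h => Finset.disjoint_left.mp
    (hdisj _ _ (by simp only [ne_eq, Fin.mk.injEq]; omega)) hu0S (h ▸ hu1S)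
  have hne02 : u0 ≠ u2 := fun h => Finset.disjoint_left.mp
    (hdisj _ _ (by simp only [ne_eq, Fin.mk.injEq]; omega)) hu0S (h ▸ hu2S)
  have hne12 : u1 ≠ u2 := fun h => Finset.disjoint_left.mp
    (hdisj _ _ (by simp only [ne_eq, Fin.mk.injEq]; omega)) hu1S (h ▸ hu2S)
  have hsub : ({u0, u1, u2} : Finset V) ⊆ (X i).filter (G.Adj v) := by
    intro u hu
    simp only [Finset.mem_insert, Finset.mem_singleton] at hu
    rcases hu with rfl | rfl | rfl
    · exact Finset.mem_filter.mpr ⟨hu0X, hadj _ _ hu0S⟩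
    · exact Finset.mem_filter.mpr ⟨hu1X, hadj _ _ hu1S⟩
    · exact Finset.mem_filter.mpr ⟨hu2X, hadj _ _ hu2S⟩
  have hcard : ({u0, u1, u2} : Finset V).card = 3 := by
    rw [Finset.card_insert_of_notMem (by simp [hne01, hne02]),
        Finset.card_insert_of_notMem (by simp [hne12]), Finset.card_singleton]
  have := (Finset.card_le_card hsub).trans (hdeg i v hvX)
  omega
end
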